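/- arXiv:1911.06642 — 4 statements merged into one kernel-verified Lean document; each statement's English description precedes it below -/
import Mathlib

section
/- For every positive integer n, the maximum number of copies of the path P_4 in a simple graph on n vertices that admits a proper edge-coloring with no rainbow copy of P_4 equals 12·⌊n/4⌋. (Exact value part of Proposition on P_4: ex(n, P_4, rainbow-P_4) = 12⌊n/4⌋.) -/
open SimpleGraph

/-- A proper edge-coloring: distinct edges of `G` sharing a vertex get different colors. -/
def IsProperEdgeColoring {V β : Type*} (G : SimpleGraph V) (c : Sym2 V → β) : Prop :=
  ∀ e₁ ∈ G.edgeSet, ∀ e₂ ∈ G.edgeSet, e₁ ≠ e₂ → (∃ v, v ∈ e₁ ∧ v ∈ e₂) → c e₁ ≠ c e₂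

/-- `G`, with edge-coloring `c`, contains a rainbow copy of `H`:
a subgraph isomorphic to `H` all of whose edges get pairwise distinct colors. -/
def HasRainbowCopy {V W β : Type*} (G : SimpleGraph V) (c : Sym2 V → β)
    (H : SimpleGraph W) : Prop :=
  ∃ A : G.Subgraph, Nonempty (A.coe ≃g H) ∧ Set.InjOn c A.edgeSet

/-- The number of copies of `H` in `G`, i.e. the number of subgraphs of `G`
isomorphic to `H`. -/
noncomputable def copyCount {V W : Type*} (G : SimpleGraph V) (H : SimpleGraph W) : ℕ :=
  Set.ncard {A : G.Subgraph | Nonempty (A.coe ≃g H)}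

/-!
Count labelled copies (injective homomorphisms `pathGraph 4 →g G`) instead of subgraphs: this
multiplies every count by `|Aut P₄| = 2`. If the colouring is proper and no `P₄` is rainbow,
every path `abcd` has `col(ab) = col(cd)`. So if `b` has three neighbours `x, y, z`, the paths
`y b x w` and `z b x w` force every other neighbour `w` of `x` into `{y, z}`; the component of
`b` is then a `K₄` (at most 24 labelled paths on 4 vertices) or, when `deg b ≥ 4`, a star (no
path at all). A component of maximum degree `≤ 2` has at most `2|C|` labelled paths, since the
first two vertices determine the rest. Summing `24⌊|C|/4⌋` over the components gives
`24⌊n/4⌋`; it is attained by `⌊n/4⌋` disjoint `K₄`'s, each coloured by its three perfect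
matchings.
-/

open Finset

theorem Nat.card_eq_sum_card_fiber {α β : Type*} [Finite α] [Fintype β] (f : α → β) :
    Nat.card α = ∑ b, Nat.card {a // f a = b} := by
  have : ∀ b, Finite {a // f a = b} := fun _ => inferInstance
  rw [← Nat.card_sigma, Nat.card_congr (Equiv.sigmaFiberEquiv f)]

theorem Finset.sum_nat_div_le {ι : Type*} (s : Finset ι) (f : ι → ℕ) (d : ℕ) :
    ∑ i ∈ s, f i / d ≤ (∑ i ∈ s, f i) / d := by
  classical
  induction s using Finset.induction with
  | empty => simp
  | insert i s hi ih =>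
    rw [sum_insert hi, sum_insert hi]
    exact (Nat.add_le_add_left ih _).trans Nat.div_add_div_le_add_div

namespace SimpleGraph

theorem edgeSet_pathGraph_four : (pathGraph 4).edgeSet = {s(0, 1), s(1, 2), s(2, 3)} := by
  ext e
  induction e using Sym2.ind with
  | h i j => fin_cases i <;> fin_cases j <;> simp [pathGraph_adj]

theorem card_pathGraph_four_iso : Nat.card (pathGraph 4 ≃g pathGraph 4) = 2 := by
  let R (a b : Fin 4) : Prop := a.val + 1 = b.val ∨ b.val + 1 = a.val
  have hR : (pathGraph 4 ≃g pathGraph 4) ≃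
      {σ : Equiv.Perm (Fin 4) // ∀ a b, R (σ a) (σ b) ↔ R a b} :=
    { toFun e := ⟨e.toEquiv, fun _ _ =>
        pathGraph_adj.symm.trans (e.map_rel_iff.trans pathGraph_adj)⟩
      invFun σ := ⟨σ.1, fun {a b} =>
        pathGraph_adj.trans ((σ.2 a b).trans pathGraph_adj.symm)⟩ }
  rw [Nat.card_congr hR, Nat.card_eq_fintype_card]
  decide

variable {V W : Type*} {G : SimpleGraph V} {H : SimpleGraph W}

theorem Copy.toSubgraph_comp_coeCopy (S : G.Subgraph) (e : H ≃g S.coe) :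
    (S.coeCopy.comp e.toCopy).toSubgraph = S := by
  change Subgraph.map (S.hom.comp e.toHom) ⊤ = S
  rw [Subgraph.map_comp, Subgraph.map_iso_top, Subgraph.map_hom_top]

noncomputable def Copy.isoEquivFiber (S : G.Subgraph) :
    (H ≃g S.coe) ≃ {f : Copy H G // f.toSubgraph = S} :=
  Equiv.ofBijective (fun e => ⟨S.coeCopy.comp e.toCopy, toSubgraph_comp_coeCopy S e⟩) <| by
    refine ⟨fun e e' h => ?_, fun ⟨f, hf⟩ => ?_⟩
    · ext w
      exact congrArg (fun f : Copy H G => f w) (congrArg Subtype.val h)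
    · subst hf
      exact ⟨f.isoToSubgraph, Subtype.ext (Copy.ext fun w => rfl)⟩

theorem card_copy_eq_copyCount_mul_card_iso [Fintype V] [Fintype W] :
    Nat.card (Copy H G) = G.copyCount H * Nat.card (H ≃g H) := by
  classical
  have hfiber (S : G.Subgraph) : Nat.card {f : Copy H G // f.toSubgraph = S} =
      if Nonempty (H ≃g S.coe) then Nat.card (H ≃g H) else 0 := by
    rw [← Nat.card_congr (Copy.isoEquivFiber S)]
    split_ifs with h
    · obtain ⟨e⟩ := h
      exact Nat.card_congr ⟨fun σ => σ.trans e.symm, fun σ => σ.trans e,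
        fun σ => by ext; simp, fun σ => by ext; simp⟩
    · have := not_nonempty_iff.mp h
      exact Nat.card_of_isEmpty
  rw [Nat.card_eq_sum_card_fiber Copy.toSubgraph, Finset.sum_congr rfl fun S _ => hfiber S,
    Finset.sum_ite, sum_const_zero, add_zero, sum_const, smul_eq_mul, copyCount]

theorem Copy.adj_zero_one (f : Copy (pathGraph 4) G) : G.Adj (f 0) (f 1) :=
  f.toHom.map_adj (pathGraph_adj.2 (by decide))

theorem Copy.adj_one_two (f : Copy (pathGraph 4) G) : G.Adj (f 1) (f 2) :=
  f.toHom.map_adj (pathGraph_adj.2 (by decide))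

theorem Copy.adj_two_three (f : Copy (pathGraph 4) G) : G.Adj (f 2) (f 3) :=
  f.toHom.map_adj (pathGraph_adj.2 (by decide))

theorem Copy.edgeSet_toSubgraph_pathGraph_four (f : Copy (pathGraph 4) G) :
    f.toSubgraph.edgeSet = {s(f 0, f 1), s(f 1, f 2), s(f 2, f 3)} := by
  simp [Subgraph.edgeSet_map, edgeSet_pathGraph_four, Set.image_insert_eq]

def pathFourCopy {a b c d : V} (hab : G.Adj a b) (hbc : G.Adj b c) (hcd : G.Adj c d)
    (hac : a ≠ c) (had : a ≠ d) (hbd : b ≠ d) : Copy (pathGraph 4) G where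
  toHom := ⟨![a, b, c, d], fun {i j} h => by
    rw [pathGraph_adj] at h
    fin_cases i <;> fin_cases j <;> simp_all [G.adj_comm]⟩
  injective' i j h := by
    have := hab.ne; have := hbc.ne; have := hcd.ne
    fin_cases i <;> fin_cases j <;> simp_all [eq_comm]

theorem Copy.connectedComponentMk_eq {W : Type*} {H : SimpleGraph W} (hH : H.Connected)
    (f : Copy H G) (a a' : W) : G.connectedComponentMk (f a) = G.connectedComponentMk (f a') :=
  ConnectedComponent.sound ((hH.preconnected a a').map f.toHom)

theorem Copy.mem_supp (C : G.ConnectedComponent) {f : Copy (pathGraph 4) G}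
    (hf : G.connectedComponentMk (f 0) = C) (i : Fin 4) : f i ∈ C.supp :=
  (f.connectedComponentMk_eq (pathGraph_connected 3) i 0).trans hf

theorem eq_of_degree_le_two {u v w w' : V} [Fintype (G.neighborSet v)] (hv : G.degree v ≤ 2)
    (huv : G.Adj u v) (hvw : G.Adj v w) (hvw' : G.Adj v w') (hwu : w ≠ u) (hw'u : w' ≠ u) :
    w = w' := by
  classical
  by_contra hww'
  have hsub : ({u, w, w'} : Finset V) ⊆ G.neighborFinset v := by
    intro x hx
    simp only [mem_insert, mem_singleton] at hx
    rcases hx with rfl | rfl | rfl <;> simp [huv.symm, hvw, hvw']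
  have := card_le_card hsub
  rw [card_eq_three.2 ⟨u, w, w', hwu.symm, hw'u.symm, hww', rfl⟩,
    card_neighborFinset_eq_degree] at this
  omega

theorem Copy.pathGraph_four_ext_of_degree_le_two [G.LocallyFinite]
    {f g : Copy (pathGraph 4) G} (hf₁ : G.degree (f 1) ≤ 2) (hf₂ : G.degree (f 2) ≤ 2)
    (h₀ : f 0 = g 0) (h₁ : f 1 = g 1) : f = g := by
  have h₂ : f 2 = g 2 := eq_of_degree_le_two hf₁ f.adj_zero_one f.adj_one_two
    (h₁ ▸ g.adj_one_two) (f.injective.ne (by decide)) (h₀ ▸ g.injective.ne (by decide))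
  have h₃ : f 3 = g 3 := eq_of_degree_le_two hf₂ f.adj_one_two f.adj_two_three
    (h₂ ▸ g.adj_two_three) (f.injective.ne (by decide)) (h₁ ▸ g.injective.ne (by decide))
  ext i
  fin_cases i <;> assumption

end SimpleGraph

section Rainbow

variable {V W β : Type*} {G : SimpleGraph V} {H : SimpleGraph W} {col : Sym2 V → β}

theorem hasRainbowCopy_iff_exists_copy :
    HasRainbowCopy G col H ↔ ∃ f : Copy H G, Set.InjOn col f.toSubgraph.edgeSet := by
  constructor
  · rintro ⟨A, ⟨e⟩, hA⟩
    exact ⟨A.coeCopy.comp e.symm.toCopy, by rwa [Copy.toSubgraph_comp_coeCopy]⟩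
  · rintro ⟨f, hf⟩
    exact ⟨f.toSubgraph, ⟨f.isoToSubgraph.symm⟩, hf⟩

theorem IsProperEdgeColoring.ne_of_adj (hc : IsProperEdgeColoring G col) {u v w : V}
    (huv : G.Adj u v) (hvw : G.Adj v w) (huw : u ≠ w) : col s(u, v) ≠ col s(v, w) :=
  hc _ huv _ hvw (by simp [huw, huv.ne]) ⟨v, by simp, by simp⟩

theorem not_hasRainbowCopy_pathGraph_four_iff (hc : IsProperEdgeColoring G col) :
    ¬ HasRainbowCopy G col (pathGraph 4) ↔
      ∀ f : Copy (pathGraph 4) G, col s(f 0, f 1) = col s(f 2, f 3) := by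
  rw [hasRainbowCopy_iff_exists_copy, not_exists]
  refine forall_congr' fun f => ?_
  have h01 := hc.ne_of_adj f.adj_zero_one f.adj_one_two (f.injective.ne (by decide))
  have h12 := hc.ne_of_adj f.adj_one_two f.adj_two_three (f.injective.ne (by decide))
  rw [f.edgeSet_toSubgraph_pathGraph_four]
  constructor
  · intro hnot
    by_contra h02
    refine hnot fun x hx y hy hxy => ?_
    simp only [Set.mem_insert_iff, Set.mem_singleton_iff] at hx hy
    rcases hx with rfl | rfl | rfl <;> rcases hy with rfl | rfl | rfl <;> simp_all [eq_comm]
  · intro h02 hinj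
    have := hinj (by simp) (by simp) h02
    rw [Sym2.eq_iff] at this
    rcases this with ⟨h, -⟩ | ⟨h, -⟩ <;> exact absurd (f.injective h) (by decide)

end Rainbow

section UpperBound

variable {V β : Type*} [Fintype V] [DecidableEq V] {G : SimpleGraph V} [DecidableRel G.Adj]
  {col : Sym2 V → β}

theorem card_neighborFinset_sdiff_le_one (hc : IsProperEdgeColoring G col)
    (hcol : ∀ f : Copy (pathGraph 4) G, col s(f 0, f 1) = col s(f 2, f 3))
    {b x w : V} (hbx : G.Adj b x) (hxw : G.Adj x w) (hwb : w ≠ b) :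
    #(G.neighborFinset b \ {x, w}) ≤ 1 := by
  by_contra! h
  obtain ⟨y, hy, z, hz, hyz⟩ := one_lt_card.1 h
  simp only [mem_sdiff, mem_neighborFinset, mem_insert, mem_singleton, not_or] at hy hz
  have hyw := hcol (pathFourCopy hy.1.symm hbx hxw hy.2.1 hy.2.2 hwb.symm)
  have hzw := hcol (pathFourCopy hz.1.symm hbx hxw hz.2.1 hz.2.2 hwb.symm)
  exact hc.ne_of_adj hy.1.symm hz.1 hyz
    (by rw [Sym2.eq_swap (a := b)]; exact hyw.trans hzw.symm)

theorem mem_insert_neighborFinset_of_three_le_degree (hc : IsProperEdgeColoring G col)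
    (hcol : ∀ f : Copy (pathGraph 4) G, col s(f 0, f 1) = col s(f 2, f 3))
    {b x w : V} (hb : 3 ≤ G.degree b) (hbx : G.Adj b x) (hxw : G.Adj x w) :
    w ∈ insert b (G.neighborFinset b) := by
  by_contra h
  simp only [mem_insert, mem_neighborFinset, not_or] at h
  have hsub : (G.neighborFinset b).erase x ⊆ G.neighborFinset b \ {x, w} := by
    intro v hv
    simp only [mem_erase, mem_neighborFinset, mem_sdiff, mem_insert, mem_singleton] at hv ⊢
    exact ⟨hv.2, by rintro (rfl | rfl) <;> [exact hv.1 rfl; exact h.2 hv.2]⟩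
  have := card_le_card hsub
  rw [card_erase_of_mem ((G.mem_neighborFinset _ _).2 hbx), card_neighborFinset_eq_degree] at this
  have := card_neighborFinset_sdiff_le_one hc hcol hbx hxw h.1
  omega

theorem eq_of_four_le_degree (hc : IsProperEdgeColoring G col)
    (hcol : ∀ f : Copy (pathGraph 4) G, col s(f 0, f 1) = col s(f 2, f 3))
    {b x w : V} (hb : 4 ≤ G.degree b) (hbx : G.Adj b x) (hxw : G.Adj x w) : w = b := by
  by_contra hwb
  have := le_card_sdiff {x, w} (G.neighborFinset b)
  have := card_le_two (a := x) (b := w)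
  have := card_neighborFinset_sdiff_le_one hc hcol hbx hxw hwb
  rw [card_neighborFinset_eq_degree] at *
  omega

theorem mem_insert_neighborFinset_of_reachable (hc : IsProperEdgeColoring G col)
    (hcol : ∀ f : Copy (pathGraph 4) G, col s(f 0, f 1) = col s(f 2, f 3))
    {b v : V} (hb : 3 ≤ G.degree b) (hv : G.Reachable b v) :
    v ∈ insert b (G.neighborFinset b) := by
  rw [reachable_iff_reflTransGen] at hv
  induction hv with
  | refl => exact mem_insert_self _ _
  | tail _ huv ih =>
    rcases mem_insert.1 ih with rfl | hu
    · exact mem_insert_of_mem ((G.mem_neighborFinset _ _).2 huv)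
    · exact mem_insert_neighborFinset_of_three_le_degree hc hcol hb
        ((G.mem_neighborFinset _ _).1 hu) huv

theorem not_reachable_of_four_le_degree (hc : IsProperEdgeColoring G col)
    (hcol : ∀ f : Copy (pathGraph 4) G, col s(f 0, f 1) = col s(f 2, f 3))
    {b : V} (hb : 4 ≤ G.degree b) (f : Copy (pathGraph 4) G) : ¬ G.Reachable b (f 1) := by
  intro hf
  have hleaf {x w w' : V} (hbx : G.Adj b x) (hxw : G.Adj x w) (hxw' : G.Adj x w') : w = w' :=
    (eq_of_four_le_degree hc hcol hb hbx hxw).trans (eq_of_four_le_degree hc hcol hb hbx hxw').symm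
  by_cases h₁ : f 1 = b
  · exact f.injective.ne (show (1 : Fin 4) ≠ 3 by decide)
      (hleaf (h₁ ▸ f.adj_one_two) f.adj_one_two.symm f.adj_two_three)
  · have hb₁ : G.Adj b (f 1) := by
      simpa [h₁] using mem_insert_neighborFinset_of_reachable hc hcol (by omega) hf
    exact f.injective.ne (show (0 : Fin 4) ≠ 2 by decide)
      (hleaf hb₁ f.adj_zero_one.symm f.adj_one_two)

section Component

variable (C : G.ConnectedComponent)

theorem card_copy_component_le_descFactorial :
    Nat.card {f : Copy (pathGraph 4) G // G.connectedComponentMk (f 0) = C} ≤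
      (Nat.card C.supp).descFactorial 4 := by
  classical
  calc _ ≤ Nat.card (Fin 4 ↪ C.supp) := Nat.card_le_card_of_injective
        (fun f => ⟨fun i => ⟨f.1 i, Copy.mem_supp C f.2 i⟩,
          fun i j h => f.1.injective (by simpa using h)⟩)
        (fun f g h => Subtype.ext (Copy.ext fun i => congrArg (fun e => ((e i : C.supp) : V)) h))
    _ = (Nat.card C.supp).descFactorial 4 := by
      simp [Nat.card_eq_fintype_card, Fintype.card_embedding_eq]

theorem card_copy_component_le_two_mul (hdeg : ∀ v ∈ C.supp, G.degree v ≤ 2) :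
    Nat.card {f : Copy (pathGraph 4) G // G.connectedComponentMk (f 0) = C} ≤
      2 * Nat.card C.supp := by
  classical
  calc _ ≤ Nat.card (Σ a : C.supp, G.neighborSet a) := Nat.card_le_card_of_injective
        (fun f => ⟨⟨f.1 0, Copy.mem_supp C f.2 0⟩, ⟨f.1 1, f.1.adj_zero_one⟩⟩)
        (fun f g h => Subtype.ext (Copy.pathGraph_four_ext_of_degree_le_two
          (hdeg _ (Copy.mem_supp C f.2 1)) (hdeg _ (Copy.mem_supp C f.2 2))
          (congrArg (fun p => (p.1 : V)) h) (congrArg (fun p => (p.2 : V)) h)))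
    _ = ∑ a : C.supp, G.degree a := by
        rw [Nat.card_sigma]
        simp only [Nat.card_eq_fintype_card, card_neighborSet_eq_degree]
    _ ≤ ∑ _a : C.supp, 2 := sum_le_sum fun a _ => hdeg a a.2
    _ = 2 * Nat.card C.supp := by simp [mul_comm, Nat.card_eq_fintype_card]

theorem card_copy_component_le (hc : IsProperEdgeColoring G col)
    (hcol : ∀ f : Copy (pathGraph 4) G, col s(f 0, f 1) = col s(f 2, f 3)) :
    Nat.card {f : Copy (pathGraph 4) G // G.connectedComponentMk (f 0) = C} ≤
      24 * (Nat.card C.supp / 4) := by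
  classical
  rcases isEmpty_or_nonempty {f : Copy (pathGraph 4) G // G.connectedComponentMk (f 0) = C}
    with h | ⟨f, hf⟩
  · simp
  have h₄ : 4 ≤ Nat.card C.supp := by
    have := card_copy_component_le_descFactorial C
    have : 0 < Nat.card {f : Copy (pathGraph 4) G // G.connectedComponentMk (f 0) = C} :=
      Nat.card_pos_iff.2 ⟨⟨f, hf⟩, inferInstance⟩
    by_contra! h
    rw [Nat.descFactorial_eq_zero_iff_lt.2 h] at *
    omega
  by_cases hdeg : ∃ b ∈ C.supp, 3 ≤ G.degree b
  · obtain ⟨b, hbC, hb⟩ := hdeg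
    have hreach {v : V} (hv : v ∈ C.supp) : G.Reachable b v :=
      ConnectedComponent.exact (hbC.trans hv.symm)
    have hb₃ : G.degree b = 3 := by
      by_contra
      exact not_reachable_of_four_le_degree hc hcol (by omega) f (hreach (Copy.mem_supp C hf 1))
    have hcard : Nat.card C.supp = 4 := by
      refine le_antisymm ?_ h₄
      calc Nat.card C.supp ≤ #(insert b (G.neighborFinset b)) := by
            rw [Nat.card_coe_set_eq, ← Set.ncard_coe_finset]
            exact Set.ncard_le_ncard fun v hv =>
              mem_insert_neighborFinset_of_reachable hc hcol hb (hreach hv)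
        _ ≤ 4 := by
            have := card_insert_le b (G.neighborFinset b)
            rw [card_neighborFinset_eq_degree] at this
            omega
    have := card_copy_component_le_descFactorial C
    rw [hcard] at this ⊢
    exact this.trans (by decide)
  · simp only [not_exists, not_and, not_le] at hdeg
    have := card_copy_component_le_two_mul C fun v hv => by have := hdeg v hv; omega
    omega

end Component

theorem card_copy_pathGraph_four_le (hc : IsProperEdgeColoring G col)
    (hcol : ∀ f : Copy (pathGraph 4) G, col s(f 0, f 1) = col s(f 2, f 3)) :
    Nat.card (Copy (pathGraph 4) G) ≤ 24 * (Fintype.card V / 4) := by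
  classical
  have := Fintype.ofFinite G.ConnectedComponent
  calc Nat.card (Copy (pathGraph 4) G)
      = ∑ C : G.ConnectedComponent,
          Nat.card {f : Copy (pathGraph 4) G // G.connectedComponentMk (f 0) = C} :=
        Nat.card_eq_sum_card_fiber _
    _ ≤ ∑ C : G.ConnectedComponent, 24 * (Nat.card C.supp / 4) :=
        sum_le_sum fun C _ => card_copy_component_le C hc hcol
    _ ≤ 24 * ((∑ C : G.ConnectedComponent, Nat.card C.supp) / 4) := by
        rw [← mul_sum]
        exact Nat.mul_le_mul_left _ (sum_nat_div_le _ _ _)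
    _ = 24 * (Fintype.card V / 4) := by
        rw [← Nat.card_eq_fintype_card, Nat.card_eq_sum_card_fiber G.connectedComponentMk]
        rfl

end UpperBound

section Construction

variable {n : ℕ}

def disjointK4Graph (n : ℕ) : SimpleGraph (Fin n) where
  Adj x y := x ≠ y ∧ x.val / 4 = y.val / 4 ∧ x.val / 4 < n / 4
  symm := ⟨fun _ _ h => ⟨h.1.symm, h.2.1.symm, h.2.1 ▸ h.2.2⟩⟩
  loopless := ⟨fun _ h => h.1 rfl⟩

theorem disjointK4Graph_adj {x y : Fin n} :
    (disjointK4Graph n).Adj x y ↔ x ≠ y ∧ x.val / 4 = y.val / 4 ∧ x.val / 4 < n / 4 :=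
  Iff.rfl

/-- Reading residues mod 4 as elements of `(ℤ/2)²`, the colour classes inside each `K₄` are its
three perfect matchings. -/
def xorColoring (n : ℕ) : Sym2 (Fin n) → ℕ :=
  Sym2.lift ⟨fun x y => x.val % 4 ^^^ y.val % 4, fun _ _ => Nat.xor_comm _ _⟩

theorem isProperEdgeColoring_xorColoring :
    IsProperEdgeColoring (disjointK4Graph n) (xorColoring n) := by
  rintro e₁ he₁ e₂ he₂ hne ⟨v, hv₁, hv₂⟩
  rw [← Sym2.other_spec hv₁] at he₁ hne ⊢
  rw [← Sym2.other_spec hv₂] at he₂ hne ⊢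
  rw [mem_edgeSet, disjointK4Graph_adj] at he₁ he₂
  simp only [xorColoring, Sym2.lift_mk, ne_eq, Nat.xor_right_injective.eq_iff]
  exact fun hmod => hne (congrArg _ (Fin.ext (by omega)))

theorem xor_perm_fin_four : ∀ σ : Equiv.Perm (Fin 4), (σ 0 : ℕ) ^^^ σ 1 = σ 2 ^^^ σ 3 := by
  decide

namespace disjointK4Graph

variable (f : Copy (pathGraph 4) (disjointK4Graph n))

theorem div_four_eq (i : Fin 4) : (f i).val / 4 = (f 0).val / 4 := by
  have h₀₁ := (disjointK4Graph_adj.1 f.adj_zero_one).2.1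
  have h₁₂ := (disjointK4Graph_adj.1 f.adj_one_two).2.1
  have h₂₃ := (disjointK4Graph_adj.1 f.adj_two_three).2.1
  fin_cases i <;> simp <;> omega

def block : Fin (n / 4) := ⟨(f 0).val / 4, (disjointK4Graph_adj.1 f.adj_zero_one).2.2⟩

noncomputable def residuePerm : Equiv.Perm (Fin 4) :=
  Equiv.ofBijective (fun i => ⟨(f i).val % 4, Nat.mod_lt _ (by norm_num)⟩) <|
    Finite.injective_iff_bijective.1 fun i j h => f.injective <| Fin.ext <| by
      have := div_four_eq f i
      have := div_four_eq f j
      simp only [Fin.mk.injEq] at h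
      simp only [Copy.coe_toHom] at *
      omega

theorem val_eq (i : Fin 4) : (f i).val = 4 * block f + residuePerm f i := by
  have := div_four_eq f i
  simp only [block, residuePerm, Equiv.ofBijective_apply]
  omega

def blockCopy (k : Fin (n / 4)) (σ : Equiv.Perm (Fin 4)) :
    Copy (pathGraph 4) (disjointK4Graph n) where
  toHom := ⟨fun i => ⟨4 * k + σ i, by omega⟩, fun {i j} h => by
    have := σ.injective.ne h.ne
    refine disjointK4Graph_adj.2 ⟨fun he => this (Fin.ext ?_), ?_, ?_⟩ <;> simp_all <;> omega⟩
  injective' i j h := σ.injective (Fin.ext (by simpa using h))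

theorem blockCopy_val (k : Fin (n / 4)) (σ : Equiv.Perm (Fin 4)) (i : Fin 4) :
    (blockCopy k σ i).val = 4 * k + σ i :=
  rfl

noncomputable def copyEquiv :
    Copy (pathGraph 4) (disjointK4Graph n) ≃ Fin (n / 4) × Equiv.Perm (Fin 4) where
  toFun f := (block f, residuePerm f)
  invFun p := blockCopy p.1 p.2
  left_inv f := Copy.ext fun i => Fin.ext (val_eq f i).symm
  right_inv := by
    rintro ⟨k, σ⟩
    have := (σ 0).isLt
    refine Prod.ext (Fin.ext ?_) (Equiv.ext fun i => Fin.ext ?_) <;>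
      simp only [block, residuePerm, Equiv.ofBijective_apply, blockCopy_val] <;> omega

theorem card_copy :
    Nat.card (Copy (pathGraph 4) (disjointK4Graph n)) = 24 * (n / 4) := by
  rw [Nat.card_congr copyEquiv, Nat.card_prod, Nat.card_eq_fintype_card (α := Equiv.Perm _),
    Fintype.card_perm]
  simp [mul_comm, Nat.factorial]

theorem xorColoring_first_eq_last (f : Copy (pathGraph 4) (disjointK4Graph n)) :
    xorColoring n s(f 0, f 1) = xorColoring n s(f 2, f 3) :=
  xor_perm_fin_four (residuePerm f)

end disjointK4Graph

end Construction

theorem copyCount_eq_simpleGraph_copyCount {V W : Type*} [Fintype V] (G : SimpleGraph V)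
    (H : SimpleGraph W) : _root_.copyCount G H = G.copyCount H := by
  classical
  rw [_root_.copyCount, SimpleGraph.copyCount, ← Set.ncard_coe_finset, coe_filter]
  simp only [mem_univ, true_and]
  congr! 3 with A
  exact ⟨fun ⟨e⟩ => ⟨e.symm⟩, fun ⟨e⟩ => ⟨e.symm⟩⟩

theorem two_mul_copyCount_pathGraph_four {V : Type*} [Fintype V] (G : SimpleGraph V) :
    2 * _root_.copyCount G (pathGraph 4) = Nat.card (Copy (pathGraph 4) G) := by
  rw [copyCount_eq_simpleGraph_copyCount, card_copy_eq_copyCount_mul_card_iso,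
    card_pathGraph_four_iso, mul_comm]

theorem p4_exact_general (n : ℕ) :
    IsGreatest {m : ℕ | ∃ (G : SimpleGraph (Fin n)) (col : Sym2 (Fin n) → ℕ),
        IsProperEdgeColoring G col ∧ ¬ HasRainbowCopy G col (pathGraph 4) ∧
        _root_.copyCount G (pathGraph 4) = m}
      (12 * (n / 4)) := by
  have hK₄ : IsProperEdgeColoring (disjointK4Graph n) (xorColoring n) :=
    isProperEdgeColoring_xorColoring
  refine ⟨⟨disjointK4Graph n, xorColoring n, hK₄,
    (not_hasRainbowCopy_pathGraph_four_iff hK₄).2 disjointK4Graph.xorColoring_first_eq_last,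
    ?_⟩, ?_⟩
  · have := two_mul_copyCount_pathGraph_four (disjointK4Graph n)
    rw [disjointK4Graph.card_copy] at this
    omega
  · rintro m ⟨G, col, hc, hnr, rfl⟩
    classical
    have := two_mul_copyCount_pathGraph_four G
    have := card_copy_pathGraph_four_le hc ((not_hasRainbowCopy_pathGraph_four_iff hc).1 hnr)
    rw [Fintype.card_fin] at this
    omega

/-- ex(n, P₄, rainbow-P₄) = 12⌊n/4⌋. -/
theorem p4_exact (n : ℕ) (hn : 0 < n) :
    IsGreatest {m : ℕ | ∃ (G : SimpleGraph (Fin n)) (col : Sym2 (Fin n) → ℕ),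
        IsProperEdgeColoring G col ∧ ¬ HasRainbowCopy G col (pathGraph 4) ∧
        _root_.copyCount G (pathGraph 4) = m}
      (12 * (n / 4)) :=
  p4_exact_general n
end

section
/- For every integer k ≥ 2 there exist a constant c > 0 and an integer n₀ such that for all n ≥ n₀ there is a simple graph G on n vertices together with a proper edge-coloring of G containing no rainbow copy of the cycle C_{2k}, such that G contains at least c·n^{k−1} copies of C_{2k}. (Lower bound of Theorem 1.2 for even cycles: ex(n, C_{2k}, rainbow-C_{2k}) = Ω(n^{k−1}).) -/
/-!
Blow up a `2k`-cycle: keep `k` hub layers as single vertices, replace each of the other layers by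
`m` copies, and join consecutive layers completely, except two adjacent non-hub layers, which are
joined by a perfect matching. Choosing a copy in each of the `k - 1` free layers gives
`m ^ (k - 1)` copies of `C_{2k}`, with `m ≈ n / 2k`. Give the edge from hub `0` to the `j`-th
matched vertex the colour of the disjoint edge from its partner to the next hub, all other colours
being distinct; this is proper. A `2k`-cycle through the matching contains both of these edges,
since its vertices there have degree `2`. A `2k`-cycle avoiding the matching also avoids hub `0`,
whose only remaining neighbour is a hub, so it lies in a bipartite graph with only `k - 1` hubs on
one side, too few for a cycle of length `2k`.
-/

open SimpleGraph

open Function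

namespace SimpleGraph

variable {V : Type*} {G : SimpleGraph V}

theorem eq_add_one_of_cycleGraph_adj {N : ℕ} [NeZero N] {i j : Fin N}
    (h : (cycleGraph N).Adj i j) : j = i + 1 ∨ i = j + 1 := by
  rw [cycleGraph_adj'] at h
  have h1 : ((1 : Fin N) : ℕ) = 1 := by
    rw [Fin.val_one', Nat.mod_eq_of_lt]
    rcases h with h | h <;> have := (i - j).isLt <;> have := (j - i).isLt <;> omega
  rcases h with h | h
  · exact Or.inr (sub_eq_iff_eq_add'.1 (Fin.ext (h.trans h1.symm)))
  · exact Or.inl (sub_eq_iff_eq_add'.1 (Fin.ext (h.trans h1.symm)))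

theorem cycleGraph_adj_add_one {N : ℕ} [NeZero N] (hN : 2 ≤ N) (i : Fin N) :
    (cycleGraph N).Adj i (i + 1) := by
  rw [cycleGraph_adj', add_sub_cancel_left, Fin.val_one', Nat.mod_eq_of_lt (by omega)]
  simp

def cycleGraphHom {N : ℕ} [NeZero N] (f : Fin N → V) (hf : ∀ i, G.Adj (f i) (f (i + 1))) :
    cycleGraph N →g G where
  toFun := f
  map_rel' {i j} h := by
    rcases eq_add_one_of_cycleGraph_adj h with rfl | rfl
    · exact hf i
    · exact (hf j).symm

namespace Subgraph

variable {A : G.Subgraph}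

theorem exists_ne_adj_adj_of_iso_cycleGraph {N : ℕ} (hN : 3 ≤ N) (e : A.coe ≃g cycleGraph N)
    {v : V} (hv : v ∈ A.verts) : ∃ u w, u ≠ w ∧ A.Adj v u ∧ A.Adj v w := by
  have : NeZero N := ⟨by omega⟩
  set x := e ⟨v, hv⟩
  have hadj : ∀ y, (cycleGraph N).Adj x y → A.Adj v (e.symm y) := fun y hy => by
    simpa [x] using e.symm.map_adj_iff.2 hy
  refine ⟨e.symm (x + 1), e.symm (x - 1), fun h => ?_,
    hadj _ (cycleGraph_adj_add_one (by omega) x), hadj _ ?_⟩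
  · have h2 : (x + 1) - (x - 1) = 0 := by rw [e.symm.injective (Subtype.ext h), sub_self]
    rw [add_sub_sub_cancel, Fin.ext_iff, Fin.val_add, Fin.val_one', Nat.mod_eq_of_lt (a := 1)
      (by omega), Fin.val_zero, Nat.mod_eq_of_lt (by omega)] at h2
    omega
  · have h := (cycleGraph_adj_add_one (by omega) (x - 1)).symm
    rwa [sub_add_cancel] at h

theorem adj_and_adj_of_iso_cycleGraph {N : ℕ} (hN : 3 ≤ N) (e : A.coe ≃g cycleGraph N)
    {v x y : V} (hv : v ∈ A.verts) (hxy : ∀ w, G.Adj v w → w = x ∨ w = y) :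
    A.Adj v x ∧ A.Adj v y := by
  obtain ⟨u, w, hne, hu, hw⟩ := exists_ne_adj_adj_of_iso_cycleGraph hN e hv
  rcases hxy u (A.adj_sub hu) with rfl | rfl <;> rcases hxy w (A.adj_sub hw) with rfl | rfl
  all_goals first | exact absurd rfl hne | exact ⟨hu, hw⟩ | exact ⟨hw, hu⟩

theorem le_card_of_iso_cycleGraph {k : ℕ} (e : A.coe ≃g cycleGraph (2 * k)) (s : Finset V)
    (hs : ∀ u v, A.Adj u v → (u ∈ s ↔ v ∉ s)) : k ≤ s.card := by
  classical
  rcases Nat.eq_zero_or_pos k with rfl | hk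
  · exact Nat.zero_le _
  have : NeZero (2 * k) := ⟨by omega⟩
  set T := Finset.univ.filter fun i : Fin (2 * k) => (e.symm i : V) ∈ s
  have hshift : T.map (Equiv.addRight 1).toEmbedding = Tᶜ := by
    ext i
    have := hs _ _ (e.symm.map_adj_iff.2 (cycleGraph_adj_add_one (by omega) (i - 1)))
    simp only [sub_add_cancel] at this
    simp [T, ← sub_eq_add_neg, this]
  have hT : T.card = k := by
    have := congrArg Finset.card hshift
    rw [Finset.card_map, Finset.card_compl, Fintype.card_fin] at this
    omega
  rw [← hT]
  refine Finset.card_le_card_of_injOn (fun i => (e.symm i : V))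
    (fun i hi => by simpa [T] using hi) fun i _ j _ h => ?_
  exact e.symm.injective (Subtype.ext h)

end Subgraph

end SimpleGraph

section Transfer

variable {V W X β : Type*} {f : V → W} {G : SimpleGraph W} {c : Sym2 W → β}

theorem IsProperEdgeColoring.comap (hf : Injective f) (hc : IsProperEdgeColoring G c) :
    IsProperEdgeColoring (G.comap f) (c ∘ Sym2.map f) := by
  rintro e₁ he₁ e₂ he₂ hne ⟨v, hv₁, hv₂⟩
  exact hc _ ((Hom.comap f G).map_mem_edgeSet he₁) _ ((Hom.comap f G).map_mem_edgeSet he₂)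
    ((Sym2.map.injective hf).ne hne)
    ⟨f v, Sym2.mem_map.2 ⟨v, hv₁, rfl⟩, Sym2.mem_map.2 ⟨v, hv₂, rfl⟩⟩

theorem HasRainbowCopy.of_comap (hf : Injective f) {H : SimpleGraph X}
    (h : HasRainbowCopy (G.comap f) (c ∘ Sym2.map f) H) : HasRainbowCopy G c H := by
  obtain ⟨A, ⟨e⟩, hinj⟩ := h
  let φ : Copy (G.comap f) G := (Embedding.comap ⟨f, hf⟩ G).toCopy
  refine ⟨A.map φ.toHom, ⟨(φ.isoSubgraphMap A).symm.trans e⟩, ?_⟩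
  rw [Subgraph.edgeSet_map]
  exact hinj.image_of_comp

end Transfer

theorem le_copyCount_of_injective {V W ι : Type*} [Finite V] [Fintype ι] {G : SimpleGraph V}
    {H : SimpleGraph W} (F : ι → G.Subgraph) (hF : Injective F)
    (hcopy : ∀ i, Nonempty ((F i).coe ≃g H)) : Fintype.card ι ≤ _root_.copyCount G H := by
  rw [← Nat.card_eq_fintype_card, ← Set.ncard_range_of_injective hF]
  exact Set.ncard_le_ncard (Set.range_subset_iff.2 hcopy)

namespace CycleBlowup

/- Vertex `(p, j)` is copy `j` of layer `p` of a `2k`-cycle. The hub layers `0, 3, 5, …, 2k - 1`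
have the single vertex `(p, 0)`; consecutive layers are completely joined, except layers `1` and
`2`, which are joined by the matching `(1, j) – (2, j)`. -/
def IsHub (p : ℕ) : Prop := p = 0 ∨ 3 ≤ p ∧ p % 2 = 1

instance : DecidablePred IsHub := fun _ => inferInstanceAs (Decidable (_ ∨ _))

def Step (k p i q j : ℕ) : Prop :=
  (q = p + 1 ∧ q < 2 * k ∨ p = 2 * k - 1 ∧ q = 0) ∧
    (IsHub p → i = 0) ∧ (IsHub q → j = 0) ∧ (p = 1 → j = i)

def graph (k : ℕ) : SimpleGraph (ℕ × ℕ) := fromRel fun u v => Step k u.1 u.2 v.1 v.2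

variable {k : ℕ}

theorem graph_adj {p i q j : ℕ} :
    (graph k).Adj (p, i) (q, j) ↔ ¬(p = q ∧ i = j) ∧ (Step k p i q j ∨ Step k q j p i) := by
  rw [graph, fromRel_adj, Ne, Prod.mk.injEq]

theorem eq_of_adj_one {j : ℕ} {v : ℕ × ℕ} (h : (graph k).Adj (1, j) v) :
    v = (0, 0) ∨ v = (2, j) := by
  obtain ⟨q, i⟩ := v
  rw [graph_adj] at h
  unfold Step IsHub at h
  simp only [Prod.mk.injEq]
  omega

theorem eq_of_adj_two (hk : 2 ≤ k) {j : ℕ} {v : ℕ × ℕ} (h : (graph k).Adj (2, j) v) :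
    v = (1, j) ∨ v = (3, 0) := by
  obtain ⟨q, i⟩ := v
  rw [graph_adj] at h
  unfold Step IsHub at h
  simp only [Prod.mk.injEq]
  omega

theorem eq_of_adj_zero {i : ℕ} {v : ℕ × ℕ} (h : (graph k).Adj (0, i) v) :
    v.1 = 1 ∨ v = (2 * k - 1, 0) := by
  obtain ⟨q, j⟩ := v
  rw [graph_adj] at h
  unfold Step IsHub at h
  simp only [Prod.mk.injEq]
  omega

def hubs (k : ℕ) : Finset (ℕ × ℕ) := (Finset.range (k - 1)).image fun t => (2 * t + 3, 0)

theorem mem_hubs {u : ℕ × ℕ} : u ∈ hubs k ↔ 3 ≤ u.1 ∧ u.1 < 2 * k ∧ u.1 % 2 = 1 ∧ u.2 = 0 := by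
  simp only [hubs, Finset.mem_image, Finset.mem_range]
  constructor
  · rintro ⟨t, ht, rfl⟩
    omega
  · rintro ⟨h₁, h₂, h₃, h₄⟩
    exact ⟨(u.1 - 3) / 2, by omega, Prod.ext (by omega) h₄.symm⟩

theorem card_hubs_le : (hubs k).card ≤ k - 1 :=
  Finset.card_image_le.trans (Finset.card_range _).le

theorem mem_hubs_iff_notMem_of_adj {u v : ℕ × ℕ} (h : (graph k).Adj u v) (hu : 3 ≤ u.1)
    (hv : 3 ≤ v.1) : u ∈ hubs k ↔ v ∉ hubs k := by
  obtain ⟨p, i⟩ := u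
  obtain ⟨q, j⟩ := v
  rw [graph_adj] at h
  unfold Step IsHub at h
  simp only [mem_hubs] at hu hv ⊢
  omega

open Classical in
noncomputable def recolor (e : Sym2 (ℕ × ℕ)) : Sym2 (ℕ × ℕ) :=
  if h : ∃ j, e = s((0, 0), (1, j)) then s((2, h.choose), (3, 0)) else e

theorem recolor_gadget (j : ℕ) : recolor s((0, 0), (1, j)) = s((2, j), (3, 0)) := by
  have h : ∃ j', s(((0 : ℕ), (0 : ℕ)), (1, j)) = s((0, 0), (1, j')) := ⟨j, rfl⟩
  rw [recolor, dif_pos h, ← (Prod.mk.inj (Sym2.congr_right.1 h.choose_spec)).2]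

theorem recolor_of_forall_ne {e : Sym2 (ℕ × ℕ)} (h : ∀ j, e ≠ s((0, 0), (1, j))) :
    recolor e = e := by
  rw [recolor, dif_neg]
  exact fun ⟨j, hj⟩ => h j hj

theorem recolor_ne {e₁ e₂ : Sym2 (ℕ × ℕ)} {v : ℕ × ℕ} (hne : e₁ ≠ e₂) (hv₁ : v ∈ e₁)
    (hv₂ : v ∈ e₂) : recolor e₁ ≠ recolor e₂ := by
  wlog h₁ : ∃ j, e₁ = s((0, 0), (1, j)) generalizing e₁ e₂
  · by_cases h₂ : ∃ j, e₂ = s((0, 0), (1, j))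
    · exact (this hne.symm hv₂ hv₁ h₂).symm
    · rwa [recolor_of_forall_ne fun j h => h₁ ⟨j, h⟩, recolor_of_forall_ne fun j h => h₂ ⟨j, h⟩]
  obtain ⟨j, rfl⟩ := h₁
  rw [recolor_gadget]
  by_cases h₂ : ∃ j', e₂ = s((0, 0), (1, j'))
  · obtain ⟨j', rfl⟩ := h₂
    rw [recolor_gadget]
    intro h
    have := (Prod.mk.inj (Sym2.congr_left.1 h)).2
    subst this
    exact hne rfl
  · rw [recolor_of_forall_ne fun j h => h₂ ⟨j, h⟩]
    rintro rfl
    rw [Sym2.mem_iff] at hv₁ hv₂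
    rcases hv₁ with rfl | rfl <;> rcases hv₂ with h | h <;> simp at h

noncomputable def coloring : Sym2 (ℕ × ℕ) → ℕ :=
  (Countable.exists_injective_nat (Sym2 (ℕ × ℕ))).choose ∘ recolor

theorem isProperEdgeColoring_coloring (G : SimpleGraph (ℕ × ℕ)) :
    IsProperEdgeColoring G coloring := by
  rintro e₁ - e₂ - hne ⟨v, hv₁, hv₂⟩ h
  exact recolor_ne hne hv₁ hv₂ ((Countable.exists_injective_nat _).choose_spec h)

theorem coloring_gadget (j : ℕ) : coloring s((0, 0), (1, j)) = coloring s((2, j), (3, 0)) := by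
  rw [coloring, comp_apply, comp_apply, recolor_gadget,
    recolor_of_forall_ne fun j' h => by simp at h]

variable {A : (graph k).Subgraph}

theorem one_notMem_verts (hk : 2 ≤ k) (e : A.coe ≃g cycleGraph (2 * k))
    (hinj : Set.InjOn coloring A.edgeSet) (j : ℕ) : (1, j) ∉ A.verts := by
  intro hj
  obtain ⟨h₀, h₂⟩ := A.adj_and_adj_of_iso_cycleGraph (by omega) e hj fun _ => eq_of_adj_one
  obtain ⟨-, h₃⟩ :=
    A.adj_and_adj_of_iso_cycleGraph (by omega) e h₂.snd_mem fun _ => eq_of_adj_two hk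
  have := hinj (A.mem_edgeSet.2 h₀.symm) (A.mem_edgeSet.2 h₃) (coloring_gadget j)
  simp at this

theorem two_notMem_verts (hk : 2 ≤ k) (e : A.coe ≃g cycleGraph (2 * k))
    (hinj : Set.InjOn coloring A.edgeSet) (j : ℕ) : (2, j) ∉ A.verts := fun hj =>
  one_notMem_verts hk e hinj j
    (A.adj_and_adj_of_iso_cycleGraph (by omega) e hj fun _ => eq_of_adj_two hk).1.snd_mem

theorem zero_notMem_verts (hk : 2 ≤ k) (e : A.coe ≃g cycleGraph (2 * k))
    (hinj : Set.InjOn coloring A.edgeSet) (i : ℕ) : (0, i) ∉ A.verts := by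
  intro hi
  obtain ⟨u, w, hne, hu, hw⟩ := A.exists_ne_adj_adj_of_iso_cycleGraph (by omega) e hi
  have hlast : ∀ x, A.Adj (0, i) x → x = (2 * k - 1, 0) := fun x hx =>
    (eq_of_adj_zero (A.adj_sub hx)).resolve_left fun h₁ =>
      one_notMem_verts hk e hinj x.2 (by rw [← h₁]; exact hx.snd_mem)
  exact hne ((hlast u hu).trans (hlast w hw).symm)

theorem three_le_of_mem_verts (hk : 2 ≤ k) (e : A.coe ≃g cycleGraph (2 * k))
    (hinj : Set.InjOn coloring A.edgeSet) {u : ℕ × ℕ} (hu : u ∈ A.verts) : 3 ≤ u.1 := by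
  obtain ⟨p, i⟩ := u
  by_contra! hp
  interval_cases p
  exacts [zero_notMem_verts hk e hinj i hu, one_notMem_verts hk e hinj i hu,
    two_notMem_verts hk e hinj i hu]

theorem not_hasRainbowCopy (hk : 2 ≤ k) :
    ¬HasRainbowCopy (graph k) coloring (cycleGraph (2 * k)) := by
  rintro ⟨A, ⟨e⟩, hinj⟩
  have := A.le_card_of_iso_cycleGraph e (hubs k) fun u v h =>
    mem_hubs_iff_notMem_of_adj (A.adj_sub h) (three_le_of_mem_verts hk e hinj h.fst_mem)
      (three_le_of_mem_verts hk e hinj h.snd_mem)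
  have := card_hubs_le (k := k)
  omega

-- Layers `1` and `2` share the choice `t 0`, as the matching requires; layer `2i + 2` uses `t i`.
def cycleVertex (t : ℕ → ℕ) (p : ℕ) : ℕ × ℕ := (p, if IsHub p then 0 else t ((p - 1) / 2))

theorem cycleVertex_adj (t : ℕ → ℕ) {p : ℕ} (hp : p < 2 * k) :
    (graph k).Adj (cycleVertex t p) (cycleVertex t ((p + 1) % (2 * k))) := by
  have hq : (p + 1) % (2 * k) = p + 1 ∧ p + 1 < 2 * k ∨
      (p + 1) % (2 * k) = 0 ∧ p + 1 = 2 * k := by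
    rcases Nat.lt_or_ge (p + 1) (2 * k) with h | h
    · exact Or.inl ⟨Nat.mod_eq_of_lt h, h⟩
    · exact Or.inr ⟨by rw [show p + 1 = 2 * k by omega, Nat.mod_self], by omega⟩
  generalize (p + 1) % (2 * k) = q at hq
  have hgadget : q = p + 1 → p = 1 → t ((q - 1) / 2) = t ((p - 1) / 2) := by
    rintro rfl rfl
    rfl
  rw [cycleVertex, cycleVertex, graph_adj]
  split_ifs <;> unfold Step IsHub at * <;> omega

theorem cycleVertex_snd_lt {t : ℕ → ℕ} {m : ℕ} (ht : ∀ i, t i < m) (p : ℕ) :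
    (cycleVertex t p).2 < m := by
  unfold cycleVertex
  split_ifs
  exacts [(Nat.zero_le _).trans_lt (ht 0), ht _]

def decode (k v : ℕ) : ℕ × ℕ := (v % (2 * k), v / (2 * k))

theorem decode_injective : Injective (decode k) := fun a b h => by
  rw [← Nat.mod_add_div a (2 * k), ← Nat.mod_add_div b (2 * k)]
  obtain ⟨h₁, h₂⟩ := Prod.mk.inj h
  rw [h₁, h₂]

theorem decode_add_mul {p j : ℕ} (hp : p < 2 * k) : decode k (p + 2 * k * j) = (p, j) := by
  rw [decode, Nat.add_mul_mod_self_left, Nat.mod_eq_of_lt hp, Nat.add_mul_div_left _ _ (by omega),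
    Nat.div_eq_of_lt hp, zero_add]

def cycleEmbedding {n : ℕ} {t : ℕ → ℕ} (ht : ∀ i, t i < n / (2 * k)) (p : Fin (2 * k)) : Fin n :=
  ⟨p + 2 * k * (cycleVertex t p).2, by
    have h₁ := Nat.mul_le_mul_left (2 * k) (cycleVertex_snd_lt ht p)
    have h₂ := Nat.mul_div_le n (2 * k)
    rw [Nat.mul_succ] at h₁
    omega⟩

theorem decode_cycleEmbedding {n : ℕ} {t : ℕ → ℕ} (ht : ∀ i, t i < n / (2 * k))
    (p : Fin (2 * k)) : decode k (cycleEmbedding ht p) = cycleVertex t p :=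
  decode_add_mul p.isLt

theorem cycleEmbedding_adj [NeZero (2 * k)] {n : ℕ} {t : ℕ → ℕ} (ht : ∀ i, t i < n / (2 * k))
    (p : Fin (2 * k)) : ((graph k).comap fun v : Fin n => decode k v).Adj (cycleEmbedding ht p)
      (cycleEmbedding ht (p + 1)) := by
  rw [comap_adj, decode_cycleEmbedding, decode_cycleEmbedding, Fin.val_add, Fin.val_one',
    Nat.add_mod_mod]
  exact cycleVertex_adj t p.isLt

theorem cycleEmbedding_injective {n : ℕ} {t : ℕ → ℕ} (ht : ∀ i, t i < n / (2 * k)) :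
    Injective (cycleEmbedding ht) := fun p q h => by
  have := congrArg (fun v : Fin n => decode k v) h
  rw [decode_cycleEmbedding, decode_cycleEmbedding] at this
  exact Fin.ext (congrArg Prod.fst this)

theorem eq_of_range_cycleEmbedding_eq {n : ℕ} {t t' : ℕ → ℕ} (ht : ∀ i, t i < n / (2 * k))
    (ht' : ∀ i, t' i < n / (2 * k))
    (h : Set.range (cycleEmbedding ht) = Set.range (cycleEmbedding ht')) {i : ℕ}
    (hi : i < k - 1) : t i = t' i := by
  obtain ⟨q, hq⟩ : cycleEmbedding ht ⟨2 * i + 2, by omega⟩ ∈ Set.range (cycleEmbedding ht') := by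
    rw [← h]
    exact ⟨_, rfl⟩
  have := congrArg (fun v : Fin n => decode k v) hq
  rw [decode_cycleEmbedding, decode_cycleEmbedding, cycleVertex, cycleVertex,
    Prod.mk.injEq] at this
  obtain ⟨hq₁, hq₂⟩ := this
  have hmid : ¬IsHub (2 * i + 2) := by unfold IsHub; omega
  rw [hq₁, if_neg hmid, if_neg hmid, show (2 * i + 2 - 1) / 2 = i by omega] at hq₂
  exact hq₂.symm

theorem pow_le_copyCount (hk : 2 ≤ k) (n : ℕ) :
    (n / (2 * k)) ^ (k - 1) ≤
      _root_.copyCount ((graph k).comap fun v : Fin n => decode k v) (cycleGraph (2 * k)) := by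
  have : NeZero (2 * k) := ⟨by omega⟩
  set m := n / (2 * k)
  let t (τ : Fin (k - 1) → Fin m) (i : ℕ) : ℕ := if h : i < k - 1 then τ ⟨i, h⟩ else 0
  have ht (τ : Fin (k - 1) → Fin m) (i : ℕ) : t τ i < m := by
    unfold t
    split_ifs
    exacts [(τ _).isLt, (τ ⟨0, by omega⟩).pos]
  let F (τ : Fin (k - 1) → Fin m) : Copy (cycleGraph (2 * k)) _ :=
    (cycleGraphHom _ (cycleEmbedding_adj (ht τ))).toCopy (cycleEmbedding_injective (ht τ))
  have hF : Injective fun τ => (F τ).toSubgraph := by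
    intro τ σ h
    have hv := congrArg Subgraph.verts h
    simp only [Subgraph.map_verts, Subgraph.verts_top, Set.image_univ] at hv
    funext i
    have := eq_of_range_cycleEmbedding_eq (ht τ) (ht σ) hv i.isLt
    exact Fin.ext (by simpa [t] using this)
  simpa using le_copyCount_of_injective _ hF fun τ => ⟨(F τ).isoToSubgraph.symm⟩

end CycleBlowup

theorem div_two_mul_le_nat_div {n d : ℕ} (hd : 0 < d) (hn : d ≤ n) :
    (n : ℝ) / (2 * d) ≤ (n / d : ℕ) := by
  have h₁ := Nat.lt_mul_div_succ n hd
  have h₂ := Nat.div_pos hn hd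
  have h₃ : n ≤ n / d * (2 * d) := by rw [Nat.mul_succ] at h₁; nlinarith
  rw [div_le_iff₀ (by positivity)]
  exact_mod_cast h₃

/-- Lower bound of Theorem 1.2 for even cycles:
ex(n, C_{2k}, rainbow-C_{2k}) = Ω(n^{k-1}). -/
theorem even_cycle_rainbow_lower (k : ℕ) (hk : 2 ≤ k) :
    ∃ c : ℝ, 0 < c ∧ ∃ n₀ : ℕ, ∀ n ≥ n₀,
      ∃ (G : SimpleGraph (Fin n)) (col : Sym2 (Fin n) → ℕ),
        IsProperEdgeColoring G col ∧ ¬ HasRainbowCopy G col (cycleGraph (2 * k)) ∧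
        c * (n : ℝ) ^ (k - 1) ≤ (_root_.copyCount G (cycleGraph (2 * k)) : ℝ) := by
  refine ⟨(1 / (4 * k)) ^ (k - 1), by positivity, 2 * k, fun n hn => ?_⟩
  have hdecode : Injective fun v : Fin n => CycleBlowup.decode k v :=
    CycleBlowup.decode_injective.comp Fin.val_injective
  refine ⟨(CycleBlowup.graph k).comap fun v : Fin n => CycleBlowup.decode k v,
    CycleBlowup.coloring ∘ Sym2.map fun v : Fin n => CycleBlowup.decode k v,
    (CycleBlowup.isProperEdgeColoring_coloring _).comap hdecode,
    fun h => CycleBlowup.not_hasRainbowCopy hk (h.of_comap hdecode), ?_⟩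
  calc (1 / (4 * k : ℝ)) ^ (k - 1) * n ^ (k - 1)
        = ((n : ℝ) / (2 * (2 * k : ℕ))) ^ (k - 1) := by rw [← mul_pow]; push_cast; ring
    _ ≤ ((n / (2 * k) : ℕ) : ℝ) ^ (k - 1) :=
        pow_le_pow_left₀ (by positivity) (div_two_mul_le_nat_div (by omega) hn) _
    _ ≤ _ := by exact_mod_cast CycleBlowup.pow_le_copyCount hk n
end

section
/- Let H be a graph on k ≥ 4 vertices. Then there exists a constant C (depending on H) such that for all n, every simple graph G on n vertices that admits a proper edge-coloring with no rainbow copy of H contains at most C·ex*(n, H)·n^{k−3} copies of H, where ex*(n, H) is the rainbow Turán number of H. (Proposition 2.1(i): ex(n, H, rainbow-H) = O(ex*(n, H)·n^{k−3}).) -/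
open SimpleGraph

/-- The rainbow Turán number ex*(n, H): the maximum number of edges in an n-vertex
graph admitting a proper edge-coloring with no rainbow copy of H. -/
noncomputable def rainbowTuranNumber {W : Type*} (n : ℕ) (H : SimpleGraph W) : ℕ :=
  sSup {m : ℕ | ∃ (G : SimpleGraph (Fin n)) (col : Sym2 (Fin n) → ℕ),
    IsProperEdgeColoring G col ∧ ¬ HasRainbowCopy G col H ∧ G.edgeSet.ncard = m}

/-!
A copy of `H` in `G` that is not rainbow contains two edges `xy`, `zw` of the same colour, and
by properness they are disjoint. Such a labelled copy `f` is determined by the pattern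
`(x, y, z, w)`, the dart `(f x, f y)` of `G` and the values of `f` off `{x, y, w}`: the missing
value `f w` is the other end of the unique edge at `f z` with the colour of `f x f y`. This gives
at most `k⁴ · 2e(G) · n^(k-3)` copies, and `e(G) ≤ ex*(n, H)` after recolouring with natural
numbers.
-/

open Finset

namespace IsProperEdgeColoring

variable {V β : Type*} {G : SimpleGraph V} {c : Sym2 V → β}

theorem eq_of_adj_of_color_eq (hc : IsProperEdgeColoring G c) {u v w : V} (huv : G.Adj u v)
    (huw : G.Adj u w) (h : c s(u, v) = c s(u, w)) : v = w := by
  by_contra hvw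
  refine hc _ huv _ huw (fun he => hvw (Sym2.congr_right.mp he)) ⟨u, ?_, ?_⟩ h <;> simp

theorem comp {γ : Type*} (hc : IsProperEdgeColoring G c) {f : β → γ}
    (hf : Set.InjOn f (c '' G.edgeSet)) : IsProperEdgeColoring G (f ∘ c) :=
  fun e₁ he₁ e₂ he₂ hne hshare heq =>
    hc e₁ he₁ e₂ he₂ hne hshare (hf (Set.mem_image_of_mem c he₁) (Set.mem_image_of_mem c he₂) heq)

end IsProperEdgeColoring

section Rainbow

variable {V W β : Type*} {G : SimpleGraph V} {c : Sym2 V → β} {H : SimpleGraph W}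

theorem HasRainbowCopy.of_comp {γ : Type*} {f : β → γ} (h : HasRainbowCopy G (f ∘ c) H) :
    HasRainbowCopy G c H :=
  let ⟨A, hA, hinj⟩ := h
  ⟨A, hA, hinj.of_comp⟩

theorem HasRainbowCopy.of_copy (f : Copy H G) (hf : Set.InjOn (c ∘ Sym2.map f) H.edgeSet) :
    HasRainbowCopy G c H := by
  refine ⟨f.toSubgraph, ⟨f.isoToSubgraph.symm⟩, ?_⟩
  rw [Subgraph.edgeSet_map, Subgraph.edgeSet_top]
  exact hf.image_of_comp

end Rainbow

theorem edgeSet_ncard_le_rainbowTuranNumber {n : ℕ} {W β : Type*} {H : SimpleGraph W}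
    {G : SimpleGraph (Fin n)} {c : Sym2 (Fin n) → β} (hc : IsProperEdgeColoring G c)
    (hr : ¬ HasRainbowCopy G c H) : G.edgeSet.ncard ≤ rainbowTuranNumber n H := by
  obtain ⟨f, hf⟩ := Set.countable_iff_exists_injOn.mp
    ((G.edgeSet.toFinite.image c).countable)
  refine le_csSup ⟨Nat.card (Sym2 (Fin n)), ?_⟩ ⟨G, f ∘ c, hc.comp hf, mt .of_comp hr, rfl⟩
  rintro m ⟨G', -, -, -, rfl⟩
  exact Set.ncard_le_card _

theorem copyCount_le_natCard_copy {V W : Type*} [Finite V] [Finite W] (G : SimpleGraph V)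
    (H : SimpleGraph W) : _root_.copyCount G H ≤ Nat.card (Copy H G) := by
  have : Finite (Copy H G) := .of_injective _ DFunLike.coe_injective
  have hrange :
      {A : G.Subgraph | Nonempty (A.coe ≃g H)} = Copy.toSubgraph (A := H) '' Set.univ := by
    rw [Set.image_univ, Copy.range_toSubgraph]
    exact Set.ext fun A => ⟨fun ⟨e⟩ => ⟨e.symm⟩, fun ⟨e⟩ => ⟨e.symm⟩⟩
  rw [_root_.copyCount, hrange, ← Set.ncard_univ]
  exact Set.ncard_image_le

section ColorRepeat

variable {V W β : Type*} {G : SimpleGraph V} {c : Sym2 V → β} {H : SimpleGraph W}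

structure ColorRepeat (H : SimpleGraph W) (c : Sym2 V → β) (f : W → V) (x y z w : W) : Prop where
  adj_xy : H.Adj x y
  adj_zw : H.Adj z w
  z_ne_x : z ≠ x
  z_ne_y : z ≠ y
  w_ne_x : w ≠ x
  w_ne_y : w ≠ y
  color_eq : c s(f x, f y) = c s(f z, f w)

theorem exists_colorRepeat (hc : IsProperEdgeColoring G c) (hr : ¬ HasRainbowCopy G c H)
    (f : Copy H G) : ∃ x y z w, ColorRepeat H c f x y z w := by
  have hni : ¬ Set.InjOn (c ∘ Sym2.map f) H.edgeSet := fun h => hr (.of_copy f h)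
  simp only [Set.InjOn, not_forall] at hni
  obtain ⟨e₁, he₁, e₂, he₂, he, hne⟩ := hni
  induction e₁ using Sym2.ind with | _ x y => ?_
  induction e₂ using Sym2.ind with | _ z w => ?_
  have hxy : H.Adj x y := he₁
  have hzw : H.Adj z w := he₂
  have hcol : c s(f x, f y) = c s(f z, f w) := he
  have hdisj : ∀ u, u ∈ s(f x, f y) → u ∉ s(f z, f w) := by
    intro u hu₁ hu₂
    refine hc _ (f.toHom.map_adj hxy) _ (f.toHom.map_adj hzw) ?_ ⟨u, hu₁, hu₂⟩ hcol
    exact fun h => hne ((Sym2.map.injective f.injective) h)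
  refine ⟨x, y, z, w, hxy, hzw, ?_, ?_, ?_, ?_, hcol⟩ <;> rintro rfl <;> simp at hdisj

theorem IsProperEdgeColoring.copy_eq_of_colorRepeat (hc : IsProperEdgeColoring G c)
    {f₁ f₂ : Copy H G} {x y z w : W}
    (h₁ : ColorRepeat H c f₁ x y z w) (h₂ : ColorRepeat H c f₂ x y z w)
    (hx : f₁ x = f₂ x) (hy : f₁ y = f₂ y)
    (hrest : ∀ v, v ≠ x → v ≠ y → v ≠ w → f₁ v = f₂ v) : f₁ = f₂ := by
  have hz : f₁ z = f₂ z := hrest z h₁.z_ne_x h₁.z_ne_y h₁.adj_zw.ne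
  have hadj₁ : G.Adj (f₁ z) (f₁ w) := f₁.toHom.map_adj h₁.adj_zw
  have hadj₂ : G.Adj (f₁ z) (f₂ w) := hz ▸ f₂.toHom.map_adj h₁.adj_zw
  have hw : f₁ w = f₂ w := hc.eq_of_adj_of_color_eq hadj₁ hadj₂ <| by
    rw [← h₁.color_eq, hx, hy, h₂.color_eq, hz]
  ext v
  by_cases hvx : v = x
  · rwa [hvx]
  by_cases hvy : v = y
  · rwa [hvy]
  by_cases hvw : v = w
  · rwa [hvw]
  exact hrest v hvx hvy hvw

theorem card_le_of_forall_colorRepeat [Fintype V] [Fintype W] (hc : IsProperEdgeColoring G c)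
    {x y z w : W} {a b : V} {S : Finset (Copy H G)}
    (hS : ∀ f ∈ S, ColorRepeat H c f x y z w ∧ f x = a ∧ f y = b) :
    #S ≤ Fintype.card V ^ (Fintype.card W - 3) := by
  classical
  obtain rfl | ⟨f₀, hf₀⟩ := S.eq_empty_or_nonempty
  · simp
  let s : Finset W := {x, y, w}ᶜ
  have hs : #s = Fintype.card W - 3 := by
    have h := (hS f₀ hf₀).1
    rw [card_compl, card_eq_three.mpr ⟨_, _, _, h.adj_xy.ne, h.w_ne_x.symm, h.w_ne_y.symm, rfl⟩]
  have hinj : Set.InjOn (fun (f : Copy H G) (v : s) => f v) S := by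
    intro f₁ h₁ f₂ h₂ heq
    obtain ⟨hrep₁, hx₁, hy₁⟩ := hS f₁ h₁
    obtain ⟨hrep₂, hx₂, hy₂⟩ := hS f₂ h₂
    exact hc.copy_eq_of_colorRepeat hrep₁ hrep₂ (hx₁.trans hx₂.symm) (hy₁.trans hy₂.symm)
      fun v hvx hvy hvw => congrFun heq ⟨v, by simp [s, hvx, hvy, hvw]⟩
  calc #S ≤ #(univ : Finset (s → V)) :=
        card_le_card_of_injOn _ (fun _ _ => mem_coe.mpr (mem_univ _)) hinj
    _ = Fintype.card V ^ (Fintype.card W - 3) := by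
        rw [card_univ, Fintype.card_fun, Fintype.card_coe, hs]

theorem natCard_copy_le [Fintype V] [Fintype W] (hc : IsProperEdgeColoring G c)
    (hr : ¬ HasRainbowCopy G c H) :
    Nat.card (Copy H G) ≤
      Fintype.card W ^ 4 * (2 * G.edgeSet.ncard) * Fintype.card V ^ (Fintype.card W - 3) := by
  classical
  choose x y z w hrep using exists_colorRepeat hc hr
  let code (f : Copy H G) : (W × W × W × W) × G.Dart :=
    ((x f, y f, z f, w f), ⟨(f (x f), f (y f)), f.toHom.map_adj (hrep f).adj_xy⟩)
  have hfiber : ∀ t ∈ univ.image code,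
      #{f | code f = t} ≤ Fintype.card V ^ (Fintype.card W - 3) := by
    simp only [Finset.mem_image, Finset.mem_univ, true_and]
    rintro _ ⟨f₀, rfl⟩
    refine card_le_of_forall_colorRepeat hc (x := x f₀) (y := y f₀) (z := z f₀) (w := w f₀)
      (a := f₀ (x f₀)) (b := f₀ (y f₀)) fun f hf => ?_
    simp only [code, mem_filter, mem_univ, true_and, Prod.ext_iff, Dart.ext_iff] at hf
    obtain ⟨⟨hx, hy, hz, hw⟩, hfx, hfy⟩ := hf
    rw [hx] at hfx
    rw [hy] at hfy
    exact ⟨by simpa only [hx, hy, hz, hw] using hrep f, hfx, hfy⟩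
  calc Nat.card (Copy H G) = #(univ : Finset (Copy H G)) := by simp
    _ ≤ Fintype.card V ^ (Fintype.card W - 3) * #(univ.image code) :=
      card_le_mul_card_image _ _ hfiber
    _ ≤ Fintype.card V ^ (Fintype.card W - 3) * (Fintype.card W ^ 4 * (2 * G.edgeSet.ncard)) := by
      gcongr
      refine (card_le_univ _).trans_eq ?_
      rw [Fintype.card_prod, dart_card_eq_twice_card_edges, ← Set.ncard_coe_finset,
        coe_edgeFinset]
      simp only [Fintype.card_prod]
      ring
    _ = _ := by ring

end ColorRepeat

theorem rainbow_general_upper_i_general {W : Type*} [Fintype W] (H : SimpleGraph W) :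
    ∃ C : ℝ, ∀ (n : ℕ) (G : SimpleGraph (Fin n)) (β : Type*) (col : Sym2 (Fin n) → β),
      IsProperEdgeColoring G col → ¬ HasRainbowCopy G col H →
      (_root_.copyCount G H : ℝ) ≤
        C * (rainbowTuranNumber n H : ℝ) * (n : ℝ) ^ (Fintype.card W - 3) := by
  refine ⟨2 * Fintype.card W ^ 4, fun n G β col hc hr => ?_⟩
  have hcount : _root_.copyCount G H ≤
      Fintype.card W ^ 4 * (2 * G.edgeSet.ncard) * n ^ (Fintype.card W - 3) := by
    simpa using (copyCount_le_natCard_copy G H).trans (natCard_copy_le hc hr)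
  have hedges : (G.edgeSet.ncard : ℝ) ≤ rainbowTuranNumber n H :=
    mod_cast edgeSet_ncard_le_rainbowTuranNumber hc hr
  calc (_root_.copyCount G H : ℝ)
      ≤ Fintype.card W ^ 4 * (2 * G.edgeSet.ncard) * n ^ (Fintype.card W - 3) := mod_cast hcount
    _ = 2 * Fintype.card W ^ 4 * G.edgeSet.ncard * n ^ (Fintype.card W - 3) := by ring
    _ ≤ 2 * Fintype.card W ^ 4 * rainbowTuranNumber n H * n ^ (Fintype.card W - 3) := by
      gcongr

/-- Proposition 2.1(i): ex(n, H, rainbow-H) = O(ex*(n, H)·n^{k-3}) for H on k ≥ 4 vertices. -/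
theorem rainbow_general_upper_i {W : Type*} [Fintype W] (H : SimpleGraph W)
    (hk : 4 ≤ Fintype.card W) :
    ∃ C : ℝ, ∀ (n : ℕ) (G : SimpleGraph (Fin n)) (β : Type*) (col : Sym2 (Fin n) → β),
      IsProperEdgeColoring G col → ¬ HasRainbowCopy G col H →
      (_root_.copyCount G H : ℝ) ≤
        C * (rainbowTuranNumber n H : ℝ) * (n : ℝ) ^ (Fintype.card W - 3) :=
  rainbow_general_upper_i_general H
end

section
/- For every integer k > 1 there exists a constant C such that for all n, every simple graph G on n vertices that admits a proper edge-coloring with no rainbow copy of the matching M_k contains at most C·n^k copies of M_k. (Upper bound of the Proposition on matchings: ex(n, M_k, rainbow-M_k) = O(n^k).) -/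
open SimpleGraph

/-- The matching M_k with k pairwise disjoint edges, on 2k vertices. -/
def matchingGraph (k : ℕ) : SimpleGraph (Fin (2 * k)) :=
  SimpleGraph.fromRel (fun a b => a.1 / 2 = b.1 / 2)

/-!
Take a rainbow matching `M` of maximum size in `G`; it has fewer than `k` edges. By maximality
every edge of `G` shares a vertex or a color with an edge of `M`. Fewer than `n` edges meet a
given vertex and, the coloring being proper, every color class is a matching and so has at most
`n` edges; hence `G` has at most `3kn` edges. A copy of `M_k` has no isolated vertex, so it is
determined by its `k` edges, and there are at most `C(3kn, k) ≤ (3k)^k n^k` copies.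
-/

open Finset

section MatchingGraph

variable {V : Type*} {k : ℕ}

def matchingIndex (j : Fin (2 * k)) : Fin k := ⟨j / 2, by omega⟩

lemma matchingGraph_adj {i j : Fin (2 * k)} :
    (matchingGraph k).Adj i j ↔ i ≠ j ∧ matchingIndex i = matchingIndex j := by
  simp only [matchingGraph, fromRel_adj, matchingIndex, Fin.ext_iff, ne_eq]
  constructor
  · rintro ⟨hne, h | h⟩ <;> exact ⟨hne, by omega⟩
  · rintro ⟨hne, h⟩
    exact ⟨hne, Or.inl h⟩

lemma matchingGraph_exists_adj (i : Fin (2 * k)) : ∃ j, (matchingGraph k).Adj i j := by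
  refine ⟨⟨if i.1 % 2 = 0 then i + 1 else i - 1, by split <;> omega⟩, ?_⟩
  simp only [matchingGraph_adj, matchingIndex, ne_eq, Fin.ext_iff]
  split <;> omega

lemma matchingGraph_edgeSet :
    (matchingGraph k).edgeSet =
      Set.range fun l : Fin k => s(⟨2 * l, by omega⟩, ⟨2 * l + 1, by omega⟩) := by
  ext e
  induction e using Sym2.ind with
  | h i j =>
    simp only [mem_edgeSet, matchingGraph_adj, matchingIndex, Set.mem_range, Sym2.eq_iff,
      Fin.ext_iff, ne_eq]
    constructor
    · rintro ⟨hne, hij⟩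
      refine ⟨⟨i / 2, by omega⟩, ?_⟩
      simp only
      omega
    · rintro ⟨l, hl⟩
      omega

lemma ncard_edgeSet_matchingGraph : (matchingGraph k).edgeSet.ncard = k := by
  rw [matchingGraph_edgeSet, Set.ncard_range_of_injective, Nat.card_eq_fintype_card,
    Fintype.card_fin]
  intro l l' h
  simp only [Sym2.eq_iff, Fin.ext_iff] at h
  omega

def matchingVertex (u v : Fin k → V) (j : Fin (2 * k)) : V :=
  if j.1 % 2 = 0 then u (matchingIndex j) else v (matchingIndex j)

lemma matchingVertex_mem (u v : Fin k → V) (j : Fin (2 * k)) :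
    matchingVertex u v j ∈ s(u (matchingIndex j), v (matchingIndex j)) := by
  unfold matchingVertex
  split
  · exact Sym2.mem_mk_left _ _
  · exact Sym2.mem_mk_right _ _

lemma matchingVertex_two_mul (u v : Fin k → V) (l : Fin k) :
    matchingVertex u v ⟨2 * l, by omega⟩ = u l := by
  have : matchingIndex (⟨2 * l, by omega⟩ : Fin (2 * k)) = l :=
    Fin.ext (by simp [matchingIndex])
  simp [matchingVertex, this]

lemma matchingVertex_two_mul_add_one (u v : Fin k → V) (l : Fin k) :
    matchingVertex u v ⟨2 * l + 1, by omega⟩ = v l := by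
  have : matchingIndex (⟨2 * l + 1, by omega⟩ : Fin (2 * k)) = l :=
    Fin.ext (by simp [matchingIndex]; omega)
  simp [matchingVertex, this]

end MatchingGraph

section MatchingCopy

variable {V : Type*} {G : SimpleGraph V} {k : ℕ} {u v : Fin k → V}

lemma matchingVertex_adj (hadj : ∀ l, G.Adj (u l) (v l)) {i j : Fin (2 * k)}
    (h : (matchingGraph k).Adj i j) : G.Adj (matchingVertex u v i) (matchingVertex u v j) := by
  rw [← mem_edgeSet, matchingGraph_edgeSet] at h
  obtain ⟨l, hl⟩ := h
  rw [← mem_edgeSet, ← Sym2.map_mk, ← hl, Sym2.map_mk, matchingVertex_two_mul,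
    matchingVertex_two_mul_add_one]
  exact hadj l

lemma matchingVertex_injective (hadj : ∀ l, G.Adj (u l) (v l))
    (hdisj : Pairwise fun l l' => ∀ x ∈ s(u l, v l), x ∉ s(u l', v l')) :
    Function.Injective (matchingVertex u v) := by
  intro i j hij
  have hindex : matchingIndex i = matchingIndex j := by
    by_contra hne
    exact hdisj hne _ (matchingVertex_mem u v i) (hij ▸ matchingVertex_mem u v j)
  by_contra hne
  exact (matchingVertex_adj hadj (matchingGraph_adj.2 ⟨hne, hindex⟩)).ne hij

def matchingCopy (hadj : ∀ l, G.Adj (u l) (v l))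
    (hdisj : Pairwise fun l l' => ∀ x ∈ s(u l, v l), x ∉ s(u l', v l')) :
    Copy (matchingGraph k) G :=
  ⟨⟨matchingVertex u v, matchingVertex_adj hadj⟩, matchingVertex_injective hadj hdisj⟩

lemma edgeSet_toSubgraph_matchingCopy (hadj : ∀ l, G.Adj (u l) (v l))
    (hdisj : Pairwise fun l l' => ∀ x ∈ s(u l, v l), x ∉ s(u l', v l')) :
    (matchingCopy hadj hdisj).toSubgraph.edgeSet = Set.range fun l => s(u l, v l) := by
  rw [Subgraph.edgeSet_map, Subgraph.edgeSet_top, matchingGraph_edgeSet, ← Set.range_comp]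
  congr 1
  funext l
  simp [matchingCopy, matchingVertex_two_mul, matchingVertex_two_mul_add_one]

end MatchingCopy

structure IsRainbowMatching {V β : Type*} (G : SimpleGraph V) (col : Sym2 V → β)
    (M : Finset (Sym2 V)) : Prop where
  subset_edgeSet : (M : Set (Sym2 V)) ⊆ G.edgeSet
  pairwise_disjoint : (M : Set (Sym2 V)).Pairwise fun e f => ∀ x ∈ e, x ∉ f
  injOn : Set.InjOn col M

namespace IsRainbowMatching

variable {V β : Type*} {G : SimpleGraph V} {col : Sym2 V → β} {M N : Finset (Sym2 V)} {k : ℕ}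

lemma mono (hM : IsRainbowMatching G col M) (hNM : N ⊆ M) : IsRainbowMatching G col N :=
  ⟨(coe_subset.2 hNM).trans hM.subset_edgeSet, hM.pairwise_disjoint.mono (coe_subset.2 hNM),
    hM.injOn.mono (coe_subset.2 hNM)⟩

lemma insert [DecidableEq V] {e : Sym2 V} (hM : IsRainbowMatching G col M) (he : e ∈ G.edgeSet)
    (hdisj : ∀ f ∈ M, ∀ x ∈ e, x ∉ f) (hcol : ∀ f ∈ M, col e ≠ col f) :
    IsRainbowMatching G col (insert e M) := by
  have heM : e ∉ M := fun h => hcol e h rfl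
  refine ⟨?_, ?_, ?_⟩
  · rw [coe_insert]
    exact Set.insert_subset he hM.subset_edgeSet
  · rw [coe_insert, Set.pairwise_insert]
    exact ⟨hM.pairwise_disjoint,
      fun f hf _ => ⟨hdisj f hf, fun x hxf hxe => hdisj f hf x hxe hxf⟩⟩
  · rw [coe_insert, Set.injOn_insert (mem_coe.not.2 heM)]
    exact ⟨hM.injOn, fun ⟨f, hf, hfe⟩ => hcol f hf hfe.symm⟩

lemma hasRainbowCopy (hM : IsRainbowMatching G col M) :
    HasRainbowCopy G col (matchingGraph #M) := by
  let g : Fin #M ≃ M := M.equivFin.symm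
  have hends : ∀ l, ∃ a b, s(a, b) = (g l : Sym2 V) := fun l =>
    Sym2.inductionOn (g l : Sym2 V) fun a b => ⟨a, b, rfl⟩
  choose u v huv using hends
  have hadj : ∀ l, G.Adj (u l) (v l) := fun l => by
    rw [← mem_edgeSet, huv]
    exact hM.subset_edgeSet (g l).2
  have hdisj : Pairwise fun l l' => ∀ x ∈ s(u l, v l), x ∉ s(u l', v l') := fun l l' hne => by
    dsimp only
    rw [huv, huv]
    exact hM.pairwise_disjoint (g l).2 (g l').2 (Subtype.coe_injective.ne (g.injective.ne hne))
  have hedges : Set.range (fun l => s(u l, v l)) = M := by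
    simp only [huv]
    ext e
    exact ⟨fun ⟨l, hl⟩ => hl ▸ (g l).2, fun he => ⟨g.symm ⟨e, he⟩, by simp⟩⟩
  let f := matchingCopy hadj hdisj
  refine ⟨f.toSubgraph, ⟨f.isoToSubgraph.symm⟩, ?_⟩
  rw [edgeSet_toSubgraph_matchingCopy, hedges]
  exact hM.injOn

lemma card_lt (hM : IsRainbowMatching G col M)
    (hno : ¬ HasRainbowCopy G col (matchingGraph k)) : #M < k := by
  by_contra! h
  obtain ⟨N, hNM, rfl⟩ := exists_subset_card_eq h
  exact hno (hM.mono hNM).hasRainbowCopy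

lemma exists_common_vertex_or_color [DecidableEq V] (hM : IsRainbowMatching G col M)
    (hmax : ∀ N, IsRainbowMatching G col N → #N ≤ #M) {e : Sym2 V} (he : e ∈ G.edgeSet) :
    ∃ f ∈ M, (∃ x ∈ e, x ∈ f) ∨ col e = col f := by
  by_contra! h
  have hext := hM.insert he (fun f hf x hxe hxf => (h f hf).1 x hxe hxf) fun f hf => (h f hf).2
  have heM : e ∉ M := fun heM => (h e heM).2 rfl
  simpa [card_insert_of_notMem heM] using hmax _ hext

end IsRainbowMatching

lemma card_le_of_pairwise_disjoint {V : Type*} [Fintype V] {S : Finset (Sym2 V)}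
    (hS : (S : Set (Sym2 V)).Pairwise fun e f => ∀ x ∈ e, x ∉ f) : #S ≤ Fintype.card V := by
  refine card_le_card_of_injOn (fun e => e.out.1) (fun _ _ => mem_coe.2 (mem_univ _)) ?_
  intro e he f hf hef
  by_contra hne
  exact hS he hf hne _ (Sym2.out_fst_mem e)
    ((show e.out.1 = f.out.1 from hef) ▸ Sym2.out_fst_mem f)

section EdgeBound

variable {V β : Type*} [Fintype V] {G : SimpleGraph V} [DecidableRel G.Adj] {col : Sym2 V → β}

lemma IsProperEdgeColoring.card_colorClass_le [DecidableEq β] (hp : IsProperEdgeColoring G col)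
    (c : β) : #{e ∈ G.edgeFinset | col e = c} ≤ Fintype.card V := by
  refine card_le_of_pairwise_disjoint fun e he f hf hne x hxe hxf => ?_
  simp only [coe_filter, mem_edgeFinset] at he hf
  exact hp e he.1 f hf.1 hne ⟨x, hxe, hxf⟩ (he.2.trans hf.2.symm)

lemma IsProperEdgeColoring.card_common_vertex_or_color_le [DecidableEq V] [DecidableEq β]
    (hp : IsProperEdgeColoring G col) (f : Sym2 V) :
    #{e ∈ G.edgeFinset | (∃ x ∈ e, x ∈ f) ∨ col e = col f} ≤ 3 * Fintype.card V := by
  induction f using Sym2.ind with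
  | h a b =>
    have hsub : {e ∈ G.edgeFinset | (∃ x ∈ e, x ∈ s(a, b)) ∨ col e = col s(a, b)} ⊆
        G.incidenceFinset a ∪ G.incidenceFinset b ∪
          {e ∈ G.edgeFinset | col e = col s(a, b)} := by
      intro e he
      simp only [mem_filter, mem_edgeFinset, Sym2.mem_iff] at he
      simp only [mem_union, mem_incidenceFinset, incidenceSet, mem_filter, mem_edgeFinset]
      grind
    calc _ ≤ #(G.incidenceFinset a ∪ G.incidenceFinset b ∪
          {e ∈ G.edgeFinset | col e = col s(a, b)}) := card_le_card hsub
      _ ≤ G.degree a + G.degree b + Fintype.card V := by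
        grw [card_union_le, card_union_le, card_incidenceFinset_eq_degree,
          card_incidenceFinset_eq_degree, hp.card_colorClass_le]
      _ ≤ 3 * Fintype.card V := by
        have := G.degree_lt_card_verts a
        have := G.degree_lt_card_verts b
        omega

theorem card_edgeFinset_le_of_not_hasRainbowCopy (hp : IsProperEdgeColoring G col) {k : ℕ}
    (hno : ¬ HasRainbowCopy G col (matchingGraph k)) :
    #G.edgeFinset ≤ 3 * k * Fintype.card V := by
  classical
  obtain ⟨M, hM, hmax⟩ := Set.exists_max_image {M | IsRainbowMatching G col M} card
    (Set.toFinite _) ⟨∅, by simp, by simp, by simp⟩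
  have hcover : G.edgeFinset ⊆
      M.biUnion fun f => {e ∈ G.edgeFinset | (∃ x ∈ e, x ∈ f) ∨ col e = col f} := by
    intro e he
    obtain ⟨f, hf, hef⟩ := hM.exists_common_vertex_or_color hmax (mem_edgeFinset.1 he)
    exact mem_biUnion.2 ⟨f, hf, mem_filter.2 ⟨he, hef⟩⟩
  calc #G.edgeFinset
      ≤ ∑ f ∈ M, #{e ∈ G.edgeFinset | (∃ x ∈ e, x ∈ f) ∨ col e = col f} :=
        (card_le_card hcover).trans card_biUnion_le
    _ ≤ ∑ _f ∈ M, 3 * Fintype.card V :=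
        sum_le_sum fun f _ => hp.card_common_vertex_or_color_le f
    _ = #M * (3 * Fintype.card V) := by rw [sum_const, smul_eq_mul]
    _ ≤ 3 * k * Fintype.card V := by
        have := (hM.card_lt hno).le
        nlinarith

end EdgeBound

section CopyCount

variable {V W : Type*} {G : SimpleGraph V} {H : SimpleGraph W}

lemma SimpleGraph.Subgraph.verts_eq_support_of_iso (hH : ∀ w, ∃ w', H.Adj w w') {A : G.Subgraph}
    (e : A.coe ≃g H) : A.verts = A.support := by
  refine A.support_subset_verts.antisymm' fun x hx => ?_
  obtain ⟨w', hw'⟩ := hH (e ⟨x, hx⟩)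
  exact ⟨e.symm w', by simpa using e.symm.map_adj_iff.2 hw'⟩

lemma SimpleGraph.Subgraph.eq_of_edgeSet_eq {A B : G.Subgraph} (hA : A.verts = A.support)
    (hB : B.verts = B.support) (h : A.edgeSet = B.edgeSet) : A = B := by
  have hadj : A.Adj = B.Adj := by
    rw [← Subgraph.spanningCoe_inj, ← edgeSet_inj, Subgraph.edgeSet_spanningCoe,
      Subgraph.edgeSet_spanningCoe, h]
  exact Subgraph.ext (by rw [hA, hB, Subgraph.support, Subgraph.support, hadj]) hadj

lemma SimpleGraph.Subgraph.ncard_edgeSet_of_iso {A : G.Subgraph} (e : A.coe ≃g H) :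
    A.edgeSet.ncard = H.edgeSet.ncard := by
  rw [← A.image_coe_edgeSet_coe,
    Set.ncard_image_of_injective _ (Sym2.map.injective Subtype.val_injective)]
  exact Nat.card_congr e.mapEdgeSet

theorem copyCount_le_choose [Fintype V] [DecidableRel G.Adj]
    (hH : ∀ w, ∃ w', H.Adj w w') :
    _root_.copyCount G H ≤ (#G.edgeFinset).choose H.edgeSet.ncard := by
  classical
  rw [← card_powersetCard, ← Set.ncard_coe_finset]
  refine Set.ncard_le_ncard_of_injOn (fun A => A.edgeSet.toFinset) ?_ ?_ (Set.toFinite _)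
  · rintro A ⟨e⟩
    rw [mem_coe, mem_powersetCard, ← Set.ncard_eq_toFinset_card', Subgraph.ncard_edgeSet_of_iso e]
    exact ⟨fun x hx => by simpa using A.edgeSet_subset (Set.mem_toFinset.1 hx), rfl⟩
  · rintro A ⟨e⟩ B ⟨e'⟩ hAB
    exact Subgraph.eq_of_edgeSet_eq (Subgraph.verts_eq_support_of_iso hH e)
      (Subgraph.verts_eq_support_of_iso hH e') (Set.toFinset_inj.1 hAB)

end CopyCount

theorem matching_rainbow_upper_general (k : ℕ) :
    ∃ C : ℝ, ∀ (n : ℕ) (G : SimpleGraph (Fin n)) (β : Type*) (col : Sym2 (Fin n) → β),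
      IsProperEdgeColoring G col → ¬ HasRainbowCopy G col (matchingGraph k) →
      (_root_.copyCount G (matchingGraph k) : ℝ) ≤ C * (n : ℝ) ^ k := by
  refine ⟨(3 * k) ^ k, fun n G β col hp hno => ?_⟩
  classical
  have hedges : #G.edgeFinset ≤ 3 * k * n := by
    simpa using card_edgeFinset_le_of_not_hasRainbowCopy hp hno
  have hcount : _root_.copyCount G (matchingGraph k) ≤ (3 * k) ^ k * n ^ k :=
    calc _root_.copyCount G (matchingGraph k)
        ≤ (#G.edgeFinset).choose k := by
          simpa [ncard_edgeSet_matchingGraph] using copyCount_le_choose matchingGraph_exists_adj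
      _ ≤ #G.edgeFinset ^ k := Nat.choose_le_pow _ _
      _ ≤ (3 * k * n) ^ k := Nat.pow_le_pow_left hedges k
      _ = (3 * k) ^ k * n ^ k := mul_pow _ _ _
  exact_mod_cast hcount

/-- Upper bound of the proposition on matchings: ex(n, M_k, rainbow-M_k) = O(n^k). -/
theorem matching_rainbow_upper (k : ℕ) (hk : 1 < k) :
    ∃ C : ℝ, ∀ (n : ℕ) (G : SimpleGraph (Fin n)) (β : Type*) (col : Sym2 (Fin n) → β),
      IsProperEdgeColoring G col → ¬ HasRainbowCopy G col (matchingGraph k) →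
      (_root_.copyCount G (matchingGraph k) : ℝ) ≤ C * (n : ℝ) ^ k :=
  matching_rainbow_upper_general k
end
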